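/- For the Kraus operators K_0 = (1/√2)diag(1,−1,0), K_1 = (1/√2)(−|0⟩⟨2| + |2⟩⟨1|), K_2 = (1/√2)(|1⟩⟨2| − |2⟩⟨0|) of the antisymmetric Werner–Holevo qutrit channel, the nine 6×6 matrices K_i† K_j ⊕ K_i K_j† (i,j ∈ {0,1,2}) are linearly independent; hence this channel is an extreme point of the set of unital trace-preserving completely positive qutrit maps. -/

import Mathlib

/-!
Already the upper-left blocks `K_i† K_j` are linearly independent. Up to the factor `1/2` and a
sign, the six with `i ≠ j` are the six distinct off-diagonal matrix units, while the three with
`i = j` are `diag(1,1,0)`, `diag(0,1,1)` and `diag(1,0,1)`, which are independent.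
-/

open Matrix BigOperators

/-- Kraus operators of the antisymmetric Werner–Holevo qutrit channel. -/
noncomputable def whK : Fin 3 → Matrix (Fin 3) (Fin 3) ℂ :=
  ![((1 / Real.sqrt 2 : ℝ) : ℂ) • !![1, 0, 0; 0, -1, 0; 0, 0, 0],
    ((1 / Real.sqrt 2 : ℝ) : ℂ) • !![0, 0, -1; 0, 0, 0; 0, 1, 0],
    ((1 / Real.sqrt 2 : ℝ) : ℂ) • !![0, 0, 0; 0, 0, 1; -1, 0, 0]]

theorem LinearIndependent.fromBlocks {ι R l m n o : Type*} [Semiring R]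
    {A : ι → Matrix l n R} (hA : LinearIndependent R A) (B : ι → Matrix l o R)
    (C : ι → Matrix m n R) (D : ι → Matrix m o R) :
    LinearIndependent R (fun i => Matrix.fromBlocks (A i) (B i) (C i) (D i)) :=
  LinearIndependent.of_comp
    { toFun := toBlocks₁₁, map_add' := fun _ _ => rfl, map_smul' := fun _ _ => rfl } hA

theorem Complex.ofReal_sqrt_two_inv_mul_self :
    ((Real.sqrt 2 : ℝ) : ℂ)⁻¹ * ((Real.sqrt 2 : ℝ) : ℂ)⁻¹ = 2⁻¹ := by
  rw [← mul_inv, ← Complex.ofReal_mul, Real.mul_self_sqrt zero_le_two, Complex.ofReal_ofNat]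

theorem sum_smul_whK_conjTranspose_mul (g : Fin 3 × Fin 3 → ℂ) :
    ∑ p, g p • ((whK p.1)ᴴ * whK p.2) = (2⁻¹ : ℂ) •
      !![g (0, 0) + g (2, 2), -g (2, 1), -g (0, 1);
         -g (1, 2), g (0, 0) + g (1, 1), -g (0, 2);
         -g (1, 0), -g (2, 0), g (1, 1) + g (2, 2)] := by
  ext a b
  fin_cases a <;> fin_cases b <;>
    simp [Fintype.sum_prod_type, Fin.sum_univ_three, whK, mul_apply, Matrix.sum_apply,
      Complex.ofReal_sqrt_two_inv_mul_self] <;> ring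

theorem linearIndependent_whK_conjTranspose_mul :
    LinearIndependent ℂ (fun p : Fin 3 × Fin 3 => (whK p.1)ᴴ * whK p.2) := by
  refine Fintype.linearIndependent_iff.2 fun g hg => ?_
  rw [sum_smul_whK_conjTranspose_mul, smul_eq_zero, or_iff_right (by norm_num)] at hg
  have h := fun a b => congrFun₂ hg a b
  simp only [Fin.isValue, of_apply, cons_val', cons_val_fin_one, Matrix.zero_apply,
    Fin.forall_fin_succ, cons_val_zero, cons_val_succ, forall_const, neg_eq_zero] at h
  obtain ⟨⟨d0, h21, h01⟩, ⟨h12, d1, h02⟩, h10, h20, d2⟩ := h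
  have h00 : g (0, 0) = 0 := by linear_combination (d0 + d1 - d2) / 2
  have h11 : g (1, 1) = 0 := by linear_combination (d1 + d2 - d0) / 2
  have h22 : g (2, 2) = 0 := by linear_combination (d2 + d0 - d1) / 2
  rintro ⟨i, j⟩
  fin_cases i <;> fin_cases j <;> assumption

/-- the nine block matrices `K_i† K_j ⊕ K_i K_j†` attached to the
antisymmetric Werner–Holevo channel are linearly independent, i.e. the channel
satisfies the Landau–Streater extremality criterion. -/
theorem wernerHolevo_extreme :
    LinearIndependent ℂ
      (fun p : Fin 3 × Fin 3 =>
        Matrix.fromBlocks ((whK p.1)ᴴ * whK p.2) 0 0 (whK p.1 * (whK p.2)ᴴ)) :=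
  linearIndependent_whK_conjTranspose_mul.fromBlocks _ _ _
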